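/- arXiv:2011.07853 — 2 statements merged into one kernel-verified Lean document; each statement's English description precedes it below -/
import Mathlib

section
/- Let y^0 := σ^{-1} be as constructed from an absolutely continuous control u with variation v and σ(t) = t − t1 + v(t), S = σ(t2). Setting ω^0(s) := (dy^0/ds)(s) and ω(s) := (du/dt)(y^0(s)) · (dy^0/ds)(s), one has ω^0(s) ≥ 0, ω^0(s) + |ω(s)| = 1 for almost every s ∈ [0,S]; in particular (ω^0(s), ω(s)) lies in the compact set C := {(w^0,w) ∈ [0,∞) × ℝ^m : w^0 + |w| = 1}. -/
open Set MeasureTheory Filter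

/-!
Extend `σ` to the increasing bijection `e` of `ℝ` that is the primitive of
`g = 1 + 𝟙_[t1,t2] ‖u'‖`, so that `y0 = e⁻¹` on `[0,S]`. Since `e⁻¹` pushes Lebesgue measure
forward to `g · Lebesgue`, it pulls null sets back to null sets; by the Lebesgue differentiation
theorem `e` has derivative `g` off a null set, hence at `y0 s` for a.e. `s`. There the chain rule
applied to `e ∘ y0 = id` gives `(1 + ‖u' (y0 s)‖) · y0'(s) = 1`.
-/

theorem isCompact_setOf_nonneg_add_norm_eq_one {E : Type*} [NormedAddCommGroup E] [ProperSpace E] :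
    IsCompact {p : ℝ × E | 0 ≤ p.1 ∧ p.1 + ‖p.2‖ = 1} := by
  have hclosed : IsClosed {p : ℝ × E | 0 ≤ p.1 ∧ p.1 + ‖p.2‖ = 1} :=
    (isClosed_le continuous_const continuous_fst).inter
      (isClosed_eq (continuous_fst.add continuous_snd.norm) continuous_const)
  refine ((isCompact_Icc (a := 0) (b := 1)).prod
    (isCompact_closedBall (0 : E) 1)).of_isClosed_subset hclosed ?_
  rintro p ⟨hp0, hp1⟩
  have := norm_nonneg p.2
  exact ⟨⟨hp0, by linarith⟩, mem_closedBall_zero_iff.2 (by linarith)⟩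

theorem nonneg_and_add_norm_smul_eq_one {E : Type*} [SeminormedAddCommGroup E] [NormedSpace ℝ E]
    {w : E} {d : ℝ} (h : (1 + ‖w‖) * d = 1) : 0 ≤ d ∧ d + ‖d • w‖ = 1 := by
  have hd : 0 ≤ d := by
    by_contra! hd
    nlinarith [norm_nonneg w]
  refine ⟨hd, ?_⟩
  rw [norm_smul, Real.norm_of_nonneg hd]
  linarith

section Primitive

variable {g : ℝ → ℝ}

theorem exists_orderIso_eq_integral_of_one_le (hg : LocallyIntegrable g volume)
    (hg1 : ∀ t, 1 ≤ g t) (c : ℝ) : ∃ e : ℝ ≃o ℝ, ∀ t, e t = ∫ r in c..t, g r := by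
  have hint (a b : ℝ) : IntervalIntegrable g volume a b :=
    (hg.integrableOn_isCompact isCompact_uIcc).intervalIntegrable
  set φ : ℝ → ℝ := fun t => ∫ r in c..t, g r
  have hgrowth {a b : ℝ} (hab : a ≤ b) : b - a ≤ φ b - φ a := by
    have h := intervalIntegral.integral_mono_on hab intervalIntegrable_const (hint a b)
      fun x _ => hg1 x
    rwa [intervalIntegral.integral_const, smul_eq_mul, mul_one,
      ← intervalIntegral.integral_interval_sub_left (hint c b) (hint c a)] at h
  have hmono : StrictMono φ := fun a b hab => by linarith [hgrowth hab.le]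
  have hsurj : Function.Surjective φ := by
    refine (intervalIntegral.continuous_primitive hint c).surjective ?_ ?_
    · refine tendsto_atTop_mono' atTop ?_ (tendsto_atTop_add_const_right atTop (φ c - c) tendsto_id)
      filter_upwards [eventually_ge_atTop c] with t ht
      change t + (φ c - c) ≤ φ t
      linarith [hgrowth ht]
    · refine tendsto_atBot_mono' atBot ?_ (tendsto_atBot_add_const_right atBot (φ c - c) tendsto_id)
      filter_upwards [eventually_le_atBot c] with t ht
      change φ t ≤ t + (φ c - c)
      linarith [hgrowth ht]
  exact ⟨hmono.orderIsoOfSurjective φ hsurj, fun _ => rfl⟩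

theorem OrderIso.map_withDensity_eq_volume_of_eq_integral {c : ℝ} (e : ℝ ≃o ℝ)
    (hg : LocallyIntegrable g volume) (hg0 : 0 ≤ᵐ[volume] g)
    (he : ∀ t, e t = ∫ r in c..t, g r) :
    (volume.withDensity fun r => ENNReal.ofReal (g r)).map e = volume := by
  refine (Real.measure_ext_Ioo_rat fun p q => ?_).symm
  rw [Measure.map_apply e.continuous.measurable measurableSet_Ioo, e.preimage_Ioo,
    withDensity_apply _ measurableSet_Ioo, Real.volume_Ioo]
  rcases le_or_gt (p : ℝ) q with hpq | hpq
  · have hle : e.symm p ≤ e.symm q := e.symm.monotone hpq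
    have hint : IntegrableOn g (Ioo (e.symm p) (e.symm q)) :=
      (hg.integrableOn_isCompact isCompact_Icc).mono_set Ioo_subset_Icc_self
    rw [← ofReal_integral_eq_lintegral_ofReal hint (ae_restrict_of_ae hg0),
      ← integral_Ioc_eq_integral_Ioo, ← intervalIntegral.integral_of_le hle,
      ← intervalIntegral.integral_interval_sub_left, ← he, ← he, e.apply_symm_apply,
      e.apply_symm_apply]
    all_goals exact (hg.integrableOn_isCompact isCompact_uIcc).intervalIntegrable
  · rw [Ioo_eq_empty (not_lt.2 (e.symm.monotone hpq.le)), setLIntegral_empty,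
      ENNReal.ofReal_eq_zero.2 (by linarith)]

theorem OrderIso.quasiMeasurePreserving_symm_of_eq_integral {c : ℝ} (e : ℝ ≃o ℝ)
    (hg : LocallyIntegrable g volume) (hg0 : 0 ≤ᵐ[volume] g)
    (he : ∀ t, e t = ∫ r in c..t, g r) :
    Measure.QuasiMeasurePreserving e.symm := by
  refine ⟨e.symm.continuous.measurable, ?_⟩
  have h := MeasurableEquiv.map_symm_map e.toHomeomorph.toMeasurableEquiv
    (μ := volume.withDensity fun r => ENNReal.ofReal (g r))
  change Measure.map e.symm (Measure.map e _) = _ at h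
  rw [e.map_withDensity_eq_volume_of_eq_integral hg hg0 he] at h
  rw [h]
  exact withDensity_absolutelyContinuous _ _

end Primitive

theorem stmt2_general {m : ℕ} (t1 t2 : ℝ)
    (u' : ℝ → EuclideanSpace ℝ (Fin m))
    (hu'int : IntegrableOn u' (Icc t1 t2))
    (v σ : ℝ → ℝ) (S : ℝ)
    (hv : ∀ t ∈ Icc t1 t2, v t = ∫ r in t1..t, ‖u' r‖)
    (hσ : ∀ t ∈ Icc t1 t2, σ t = t - t1 + v t)
    (y0 : ℝ → ℝ)
    (hinv2 : ∀ s ∈ Icc 0 S, σ (y0 s) = s)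
    (hmaps : MapsTo y0 (Icc 0 S) (Icc t1 t2))
    (C : Set (ℝ × EuclideanSpace ℝ (Fin m)))
    (hC : C = {p : ℝ × EuclideanSpace ℝ (Fin m) | 0 ≤ p.1 ∧ p.1 + ‖p.2‖ = 1}) :
    IsCompact C ∧
    ∀ᵐ s, s ∈ Icc 0 S → ∀ d : ℝ, HasDerivAt y0 d s →
      0 ≤ d ∧ d + ‖d • u' (y0 s)‖ = 1 ∧ (d, d • u' (y0 s)) ∈ C := by
  refine ⟨hC ▸ isCompact_setOf_nonneg_add_norm_eq_one, ?_⟩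
  set g : ℝ → ℝ := fun t => 1 + (Icc t1 t2).indicator (fun r => ‖u' r‖) t
  have hnorm : Integrable ((Icc t1 t2).indicator fun r => ‖u' r‖) :=
    IntegrableOn.integrable_indicator hu'int.norm measurableSet_Icc
  have hg : LocallyIntegrable g volume := (locallyIntegrable_const 1).add hnorm.locallyIntegrable
  have hg1 (t : ℝ) : 1 ≤ g t :=
    le_add_of_nonneg_right (indicator_nonneg (fun r _ => norm_nonneg (u' r)) t)
  obtain ⟨e, he⟩ := exists_orderIso_eq_integral_of_one_le hg hg1 t1
  have heσ (t : ℝ) (ht : t ∈ Icc t1 t2) : e t = σ t := by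
    have hon : EqOn ((Icc t1 t2).indicator fun r => ‖u' r‖) (fun r => ‖u' r‖) (uIcc t1 t) :=
      fun r hr => indicator_of_mem (Icc_subset_Icc_right ht.2 (uIcc_of_le ht.1 ▸ hr)) _
    rw [he, intervalIntegral.integral_add intervalIntegrable_const hnorm.intervalIntegrable,
      intervalIntegral.integral_const, smul_eq_mul, mul_one, intervalIntegral.integral_congr hon,
      hσ t ht, hv t ht]
  have hy0 : ∀ s ∈ Icc 0 S, e (y0 s) = s := fun s hs => (heσ _ (hmaps hs)).trans (hinv2 s hs)
  have hderiv : ∀ᵐ s, HasDerivAt e (g (e.symm s)) (e.symm s) := by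
    refine (e.quasiMeasurePreserving_symm_of_eq_integral hg
      (Eventually.of_forall fun t => zero_le_one.trans (hg1 t)) he).ae
      (p := fun t => HasDerivAt e (g t) t) ?_
    filter_upwards [LocallyIntegrable.ae_hasDerivAt_integral hg] with t ht
    exact (funext he : ⇑e = _) ▸ ht t1
  filter_upwards [hderiv, (Ioo_ae_eq_Icc (a := 0) (b := S)).mem_iff] with s hs hIoo hsIcc d hd
  have hsy0 : e.symm s = y0 s := e.symm_apply_eq.2 (hy0 s hsIcc).symm
  have hslope : (1 + ‖u' (y0 s)‖) * d = 1 := by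
    have hcomp : HasDerivAt (e ∘ y0) (g (y0 s) * d) s := (hsy0 ▸ hs).comp s hd
    have hid : HasDerivAt (e ∘ y0) 1 s :=
      (hasDerivAt_id s).congr_of_eventuallyEq <| eventually_of_mem
        (isOpen_Ioo.mem_nhds (hIoo.2 hsIcc)) fun s' hs' => hy0 s' (Ioo_subset_Icc_self hs')
    simpa [g, indicator_of_mem (hmaps hsIcc)] using hcomp.unique hid
  obtain ⟨hd0, hd1⟩ := nonneg_and_add_norm_smul_eq_one hslope
  exact ⟨hd0, hd1, hC ▸ ⟨hd0, hd1⟩⟩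

/-- With `y⁰ = σ⁻¹` as constructed from an absolutely continuous control `u`
(`σ(t) = t - t1 + v(t)`, `S = σ(t2)`), setting `ω⁰(s) = (y⁰)'(s)` and
`ω(s) = u'(y⁰(s)) · (y⁰)'(s)`, one has `ω⁰(s) ≥ 0` and `ω⁰(s) + |ω(s)| = 1` for a.e.
`s ∈ [0,S]`; in particular `(ω⁰(s), ω(s))` lies in the compact set
`C = {(w⁰,w) ∈ [0,∞) × ℝᵐ : w⁰ + |w| = 1}`. -/
theorem stmt2 {m : ℕ} (t1 t2 : ℝ) (h12 : t1 < t2)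
    (u u' : ℝ → EuclideanSpace ℝ (Fin m))
    (hu'int : IntegrableOn u' (Icc t1 t2))
    (hu : ∀ t ∈ Icc t1 t2, u t = u t1 + ∫ r in t1..t, u' r)
    (hu' : ∀ᵐ t, t ∈ Icc t1 t2 → HasDerivAt u (u' t) t)
    (v σ : ℝ → ℝ) (S : ℝ)
    (hv : ∀ t ∈ Icc t1 t2, v t = ∫ r in t1..t, ‖u' r‖)
    (hσ : ∀ t ∈ Icc t1 t2, σ t = t - t1 + v t) (hS : S = σ t2)
    (y0 : ℝ → ℝ)
    (hinv1 : ∀ t ∈ Icc t1 t2, y0 (σ t) = t)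
    (hinv2 : ∀ s ∈ Icc 0 S, σ (y0 s) = s)
    (hmaps : MapsTo y0 (Icc 0 S) (Icc t1 t2))
    (hlip : LipschitzOnWith 1 y0 (Icc 0 S))
    (C : Set (ℝ × EuclideanSpace ℝ (Fin m)))
    (hC : C = {p : ℝ × EuclideanSpace ℝ (Fin m) | 0 ≤ p.1 ∧ p.1 + ‖p.2‖ = 1}) :
    IsCompact C ∧
    ∀ᵐ s, s ∈ Icc 0 S → ∀ d : ℝ, HasDerivAt y0 d s →
      0 ≤ d ∧ d + ‖d • u' (y0 s)‖ = 1 ∧ (d, d • u' (y0 s)) ∈ C :=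
  stmt2_general t1 t2 u' hu'int v σ S hv hσ y0 hinv2 hmaps C hC
end

section
/- Let μ be a finite nonnegative Borel measure on [s̄, S̄], let m : [s̄, S̄] → ℝ^n with |m| ≤ L μ-a.e., let G : [s̄, S̄] → ℝ^n be measurable with |G| ≤ 2M̃, and let q : [s̄, S̄] → ℝ^n satisfy |q(s) − ∫_{[s̄,s)} m dμ| ≤ C̄·μ([s̄, s))·(s − s̄) and q(s)·G(s) ≤ 0 for a.e. s. If additionally ∫_{[s̄,s)} m(σ)·G(s) dμ(σ) ≥ δ·μ([s̄, s)) for a.e. s in a set Γ of positive measure contained in [s̄, s̄+ε], with δ > 0, then for ε < δ/(2M̃·C̄) one has μ([s̄, s)) = 0 for a.e. s ∈ Γ. -/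
open Set MeasureTheory RealInnerProductSpace

/-- The concluding contradiction computation in the normality proof: under the stated
bounds on `q`, `m`, `G` and the inward-pointing lower estimate on `Γ ⊆ [s̄, s̄+ε]`, if
`ε < δ/(2M̃C̄)` then `μ([s̄,s)) = 0` for a.e. `s ∈ Γ`. -/
theorem stmt15 {n : ℕ} (sbar Sbar ε δ L Mt Cb : ℝ) (hsS : sbar ≤ Sbar)
    (hδ : 0 < δ) (hMt : 0 < Mt) (hCb : 0 < Cb) (hε : 0 < ε)
    (hεb : ε < δ / (2 * Mt * Cb))
    (μ : MeasureTheory.Measure ℝ) [MeasureTheory.IsFiniteMeasure μ]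
    (m : ℝ → EuclideanSpace ℝ (Fin n)) (hm : Integrable m μ)
    (hmb : ∀ᵐ σ ∂μ, ‖m σ‖ ≤ L)
    (G : ℝ → EuclideanSpace ℝ (Fin n)) (hG : Measurable G)
    (hGb : ∀ s, ‖G s‖ ≤ 2 * Mt)
    (q : ℝ → EuclideanSpace ℝ (Fin n))
    (Γ : Set ℝ) (hΓm : MeasurableSet Γ)
    (hΓsub : Γ ⊆ Icc sbar (sbar + ε)) (hΓsub' : Γ ⊆ Icc sbar Sbar)
    (hΓpos : 0 < MeasureTheory.volume Γ)
    (hq1 : ∀ᵐ s, s ∈ Icc sbar Sbar →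
      ‖q s - ∫ σ in Ico sbar s, m σ ∂μ‖ ≤ Cb * (μ (Ico sbar s)).toReal * (s - sbar))
    (hq2 : ∀ᵐ s, s ∈ Icc sbar Sbar → ⟪q s, G s⟫ ≤ 0)
    (hΓ : ∀ᵐ s, s ∈ Γ →
      δ * (μ (Ico sbar s)).toReal ≤ ⟪∫ σ in Ico sbar s, m σ ∂μ, G s⟫) :
    ∀ᵐ s, s ∈ Γ → μ (Ico sbar s) = 0 := by
  filter_upwards [hq1, hq2, hΓ] with s h1 h2 h3 hs
  have hs2 := hΓsub' hs
  have hs1 := hΓsub hs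
  have h1' := h1 hs2
  have h2' := h2 hs2
  have h3' := h3 hs
  set I := ∫ σ in Ico sbar s, m σ ∂μ with hI
  set μr := (μ (Ico sbar s)).toReal with hμr
  have hμr0 : 0 ≤ μr := ENNReal.toReal_nonneg
  have hsplit : ⟪q s, G s⟫ = ⟪q s - I, G s⟫ + ⟪I, G s⟫ := by
    rw [inner_sub_left]; ring
  have habs : |⟪q s - I, G s⟫| ≤ Cb * μr * (s - sbar) * (2 * Mt) := by
    refine (abs_real_inner_le_norm _ _).trans ?_
    have hGn : (0:ℝ) ≤ ‖G s‖ := norm_nonneg _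
    nlinarith [hGb s, norm_nonneg (q s - I)]
  have hlow : -(Cb * μr * (s - sbar) * (2 * Mt)) ≤ ⟪q s - I, G s⟫ :=
    neg_le_of_abs_le habs
  have hkey : μr * (δ - 2 * Mt * Cb * (s - sbar)) ≤ 0 := by nlinarith
  have hsε : s - sbar ≤ ε := by linarith [hs1.2]
  have hεδ : 2 * Mt * Cb * ε < δ := by
    have h2 : 0 < 2 * Mt * Cb := by positivity
    rw [lt_div_iff₀ h2] at hεb; linarith
  have hmono : 2 * Mt * Cb * (s - sbar) ≤ 2 * Mt * Cb * ε :=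
    mul_le_mul_of_nonneg_left hsε (by positivity)
  have hpos : 0 < δ - 2 * Mt * Cb * (s - sbar) := by linarith
  have hμr_le : μr ≤ 0 := by nlinarith
  have : μr = 0 := le_antisymm hμr_le hμr0
  rw [hμr, ENNReal.toReal_eq_zero_iff] at this
  exact this.resolve_right (measure_ne_top μ _)
end
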